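/- arXiv:math/0608714 — 2 statements merged into one kernel-verified Lean document; each statement's English description precedes it below -/
import Mathlib

section
/- Let r_1,...,r_n be positive integers, q_1,...,q_n nonzero rationals, and let V ⊂ (C*)^n be the solution set of the diagonal system Z_j^{r_j} = q_j (1 ≤ j ≤ n). Let u = u_1 Z_1 + ... + u_n Z_n with u_i ≠ 0 for all i, and define recursively m_1(Y) := u_1^{-r_1} Y^{r_1} − q_1 and m_i(Y) := Res_W(u_i^{-r_i}(Y − W)^{r_i} − q_i, m_{i−1}(W)) for 2 ≤ i ≤ n. Then every point x ∈ V satisfies m_n(u(x)) = 0, and m_n has degree r_1···r_n = #V. If moreover u separates the points of V, then m_n is (up to a nonzero rational scalar) the minimal polynomial of u on V, i.e., m_n is proportional to Π_{x∈V}(Y − u(x)). -/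
open Polynomial

/-!
Over `ℂ`, `Res_W(f, g) = lc(g)^{deg f} · ∏_{g(β) = 0} f(Y, β)`, and
`u⁻ʳ(Y - β)ʳ - q = u⁻ʳ · ∏_{wʳ = q uʳ} (Y - (β + w))`. By induction, `m_i` is therefore a nonzero
rational multiple of `∏ (Y - (w₀ + ⋯ + wᵢ))`, the product running over all choices of roots
`w_j^{r_j} = q_j u_j^{r_j}` with multiplicity: `r₀ ⋯ rᵢ` factors. Substituting `w_j = u_j z_j`
shows that `u(z)` is among these roots for every `z ∈ V`. As `#V = r₀ ⋯ r_{n-1}` too, when `u` is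
injective on `V` the values `u(z)` exhaust the roots, which gives the minimal polynomial.
-/

/-- The resultant with respect to `W` of `f ∈ ℂ[Y][W]` (outer variable `W`,
coefficients in `ℂ[Y]`) and `g ∈ ℂ[W]`, via the classical root formula
`Res_W(f,g) = lc(g)^{deg_W f}·Π_{g(β)=0} f(Y,β)` (roots with multiplicity). -/
noncomputable def resW (f : Polynomial (Polynomial ℂ)) (g : Polynomial ℂ) :
    Polynomial ℂ :=
  Polynomial.C (g.leadingCoeff ^ f.natDegree) *
    (g.roots.map fun b => f.eval (Polynomial.C b)).prod

section NthRoots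

variable {K : Type*} [Field K] [IsAlgClosed K] {k : ℕ}

theorem card_nthRoots_eq (a : K) : Multiset.card (nthRoots k a) = k := by
  rw [nthRoots, IsAlgClosed.card_roots_eq_natDegree, natDegree_X_pow_sub_C]

theorem prod_nthRoots_X_sub_C (hk : 0 < k) (a : K) :
    ((nthRoots k a).map fun w => X - C w).prod = X ^ k - C a :=
  ((IsAlgClosed.splits _).eq_prod_roots_of_monic (monic_X_pow_sub_C a hk.ne')).symm

theorem prod_nthRoots_X_sub_C_add (hk : 0 < k) (a b : K) :
    ((nthRoots k a).map fun w => X - C (b + w)).prod = (X - C b) ^ k - C a := by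
  have h := congrArg (·.comp (X - C b)) (prod_nthRoots_X_sub_C hk a)
  simp only [multiset_prod_comp, Multiset.map_map, Function.comp_def, sub_comp, X_comp, C_comp,
    pow_comp] at h
  rw [← h]
  congr 1
  refine Multiset.map_congr rfl fun w _ => ?_
  rw [C_add]
  ring

theorem card_nthRootsFinset_eq [CharZero K] (hk : 0 < k) {a : K} (ha : a ≠ 0) :
    (nthRootsFinset k a).card = k := by
  classical
  have hnodup : (nthRoots k a).Nodup :=
    nodup_roots (separable_X_pow_sub_C a (Nat.cast_ne_zero.2 hk.ne') ha)
  rw [nthRootsFinset_def, Multiset.toFinset_card_of_nodup hnodup, card_nthRoots_eq]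

theorem ncard_setOf_pow_eq [CharZero K] {n : ℕ} {r : Fin n → ℕ} {a : Fin n → K}
    (hr : ∀ j, 0 < r j) (ha : ∀ j, a j ≠ 0) :
    {z : Fin n → K | ∀ j, z j ^ r j = a j}.ncard = ∏ j, r j := by
  have hV : {z : Fin n → K | ∀ j, z j ^ r j = a j} =
      ↑(Fintype.piFinset fun j => nthRootsFinset (r j) (a j)) := by
    ext z
    simp [mem_nthRootsFinset (hr _)]
  rw [hV, Set.ncard_coe_finset, Fintype.card_piFinset]
  exact Finset.prod_congr rfl fun j _ => card_nthRootsFinset_eq (hr j) (ha j)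

end NthRoots

noncomputable def rootSums {R : Type*} [CommRing R] [IsDomain R] (r : ℕ → ℕ) (c : ℕ → R) :
    ℕ → Multiset R
  | 0 => nthRoots (r 0) (c 0)
  | i + 1 => (rootSums r c i).bind fun b => (nthRoots (r (i + 1)) (c (i + 1))).map (b + ·)

theorem sum_mem_rootSums {R : Type*} [CommRing R] [IsDomain R] (r : ℕ → ℕ) (c : ℕ → R) :
    ∀ (i : ℕ) (w : Fin (i + 1) → R), (∀ j : Fin (i + 1), w j ∈ nthRoots (r j) (c j)) →
      ∑ j, w j ∈ rootSums r c i
  | 0, w, hw => by simpa [rootSums] using hw 0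
  | i + 1, w, hw => by
    rw [Fin.sum_univ_castSucc, rootSums]
    exact Multiset.mem_bind.2 ⟨_, sum_mem_rootSums r c i _ fun j => hw j.castSucc,
      Multiset.mem_map_of_mem _ (hw (Fin.last _))⟩

theorem card_rootSums {K : Type*} [Field K] [IsAlgClosed K] (r : ℕ → ℕ) (c : ℕ → K)
    (i : ℕ) :
    Multiset.card (rootSums r c i) = ∏ j ∈ Finset.range (i + 1), r j := by
  induction i with
  | zero => simp [rootSums, card_nthRoots_eq]
  | succ i ih =>
    simp [rootSums, Multiset.card_bind, card_nthRoots_eq, ih, Finset.prod_range_succ _ (i + 1)]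

theorem resW_C_mul_prod_X_sub_C (f : ℂ[X][X]) {e : ℂ} (he : e ≠ 0) (T : Multiset ℂ) :
    resW f (C e * (T.map fun t => X - C t).prod) =
      C (e ^ f.natDegree) * (T.map fun b => f.eval (C b)).prod := by
  have hmonic := monic_multiset_prod_of_monic T _ fun t _ => monic_X_sub_C t
  rw [resW, leadingCoeff_mul, leadingCoeff_C, hmonic.leadingCoeff, mul_one, roots_C_mul _ he,
    roots_multiset_prod_X_sub_C]

theorem resW_binomial_prod_X_sub_C {k : ℕ} (hk : 0 < k) {a e : ℂ} (ha : a ≠ 0) (he : e ≠ 0)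
    (c : ℂ) (T : Multiset ℂ) :
    resW (C (C a) * (C X - X) ^ k - C (C (a * c))) (C e * (T.map fun t => X - C t).prod) =
      C (e ^ k * a ^ Multiset.card T) *
        ((T.bind fun b => (nthRoots k c).map (b + ·)).map fun t => X - C t).prod := by
  have hdeg : (C (C a) * (C X - X) ^ k - C (C (a * c)) : ℂ[X][X]).natDegree = k := by
    rw [natDegree_sub_C, natDegree_C_mul (C_ne_zero.2 ha), natDegree_pow, ← neg_sub,
      natDegree_neg, natDegree_X_sub_C, mul_one]
  have heval : ∀ b : ℂ, (C (C a) * (C X - X) ^ k - C (C (a * c)) : ℂ[X][X]).eval (C b) =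
      C a * ((nthRoots k c).map fun w => X - C (b + w)).prod := by
    intro b
    rw [prod_nthRoots_X_sub_C_add hk]
    simp only [eval_sub, eval_mul, eval_pow, eval_C, eval_X, C_mul]
    ring
  rw [resW_C_mul_prod_X_sub_C _ he, hdeg, Multiset.map_congr rfl fun b _ => heval b,
    Multiset.prod_map_mul, Multiset.map_const', Multiset.prod_replicate,
    Multiset.map_bind, Multiset.prod_bind, C_mul, C_pow, C_pow]
  simp only [Multiset.map_map, Function.comp_def]
  ring

theorem iteratedResultant_eq_C_mul_prod_rootSums {n : ℕ} {r : ℕ → ℕ} {q u : ℕ → ℚ}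
    (hr : ∀ i < n, 0 < r i) (hu : ∀ i < n, u i ≠ 0) {m : ℕ → ℂ[X]}
    (hm0 : m 0 = C ((u 0 : ℂ)⁻¹ ^ r 0) * X ^ r 0 - C (q 0 : ℂ))
    (hmrec : ∀ i, i + 1 < n → m (i + 1) = resW
      (C (C ((u (i + 1) : ℂ)⁻¹ ^ r (i + 1))) * (C X - X) ^ r (i + 1) - C (C (q (i + 1) : ℂ)))
      (m i)) :
    ∀ i < n, ∃ κ : ℚ, κ ≠ 0 ∧ m i = C (κ : ℂ) *
      ((rootSums r (fun j => (q j * u j ^ r j : ℂ)) i).map fun t => X - C t).prod := by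
  have huC : ∀ i < n, (u i : ℂ) ≠ 0 := fun i hi => Rat.cast_ne_zero.2 (hu i hi)
  have hq : ∀ i < n, (q i : ℂ) = (u i : ℂ)⁻¹ ^ r i * (q i * u i ^ r i) := fun i hi => by
    rw [mul_left_comm, ← mul_pow, inv_mul_cancel₀ (huC i hi), one_pow, mul_one]
  intro i hi
  induction i with
  | zero =>
    refine ⟨(u 0)⁻¹ ^ r 0, pow_ne_zero _ (inv_ne_zero (hu 0 hi)), ?_⟩
    rw [hm0, hq 0 hi, rootSums, prod_nthRoots_X_sub_C (hr 0 hi), C_mul]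
    push_cast
    ring
  | succ i ih =>
    obtain ⟨κ, hκ, hmi⟩ := ih (by omega)
    refine ⟨κ ^ r (i + 1) * ((u (i + 1))⁻¹ ^ r (i + 1)) ^ Multiset.card
        (rootSums r (fun j => (q j * u j ^ r j : ℂ)) i),
      mul_ne_zero (pow_ne_zero _ hκ) (pow_ne_zero _ (pow_ne_zero _ (inv_ne_zero (hu _ hi)))), ?_⟩
    rw [hmrec i hi, hmi, hq (i + 1) hi, resW_binomial_prod_X_sub_C (hr (i + 1) hi)
      (pow_ne_zero _ (inv_ne_zero (huC _ hi))) (Rat.cast_ne_zero.2 hκ), rootSums]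
    push_cast
    rfl

/-- **Solving a diagonal binomial system by iterated resultants.** Let
`V ⊆ (ℂ*)ⁿ` be the solution set of `Z_j^{r_j} = q_j` with `q_j ≠ 0`, let
`u = u₁Z₁ + ⋯ + uₙZₙ` with all `uᵢ ≠ 0`, and define `m₁,…,mₙ` by
`m₁(Y) = u₁^{-r₁}Y^{r₁} - q₁` and
`m_{i+1}(Y) = Res_W(u_{i+1}^{-r_{i+1}}(Y-W)^{r_{i+1}} - q_{i+1}, m_i(W))`.
Then every `x ∈ V` satisfies `mₙ(u(x)) = 0`, `deg mₙ = r₁⋯rₙ = #V`, and if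
`u` separates the points of `V` then `mₙ` is a nonzero rational multiple of
the minimal polynomial `Π_{x∈V}(Y - u(x))`. -/
theorem diagonal_system_minimal_polynomial (n : ℕ) (hn : 0 < n)
    (r : ℕ → ℕ) (q u : ℕ → ℚ)
    (hr : ∀ i < n, 0 < r i) (hq : ∀ i < n, q i ≠ 0) (hu : ∀ i < n, u i ≠ 0)
    (m : ℕ → Polynomial ℂ)
    (hm0 : m 0 = Polynomial.C ((u 0 : ℂ)⁻¹ ^ r 0) * Polynomial.X ^ r 0
      - Polynomial.C (q 0 : ℂ))
    (hmrec : ∀ i, i + 1 < n → m (i + 1) = resW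
      (Polynomial.C (Polynomial.C ((u (i + 1) : ℂ)⁻¹ ^ r (i + 1))) *
          (Polynomial.C Polynomial.X - Polynomial.X) ^ r (i + 1)
        - Polynomial.C (Polynomial.C (q (i + 1) : ℂ)))
      (m i))
    (V : Set (Fin n → ℂ))
    (hV : V = {z : Fin n → ℂ | ∀ j : Fin n, z j ^ r j.val = (q j.val : ℂ)})
    (hVfin : V.Finite) :
    (∀ z ∈ V, (m (n - 1)).eval (∑ j : Fin n, (u j.val : ℂ) * z j) = 0) ∧
    (m (n - 1)).natDegree = ∏ i ∈ Finset.range n, r i ∧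
    V.ncard = ∏ i ∈ Finset.range n, r i ∧
    (Set.InjOn (fun z : Fin n → ℂ => ∑ j : Fin n, (u j.val : ℂ) * z j) V →
      ∃ c : ℚ, c ≠ 0 ∧ m (n - 1) = Polynomial.C (c : ℂ) *
        ∏ z ∈ hVfin.toFinset,
          (Polynomial.X - Polynomial.C (∑ j : Fin n, (u j.val : ℂ) * z j))) := by
  obtain ⟨N, rfl⟩ : ∃ N, n = N + 1 := ⟨n - 1, by omega⟩
  rw [Nat.add_sub_cancel]
  obtain ⟨κ, hκ, hm⟩ :=
    iteratedResultant_eq_C_mul_prod_rootSums hr hu hm0 hmrec N N.lt_succ_self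
  set T := rootSums r (fun j => (q j * u j ^ r j : ℂ)) N
  have hcardT : Multiset.card T = ∏ i ∈ Finset.range (N + 1), r i := card_rootSums _ _ N
  have hcardV : V.ncard = ∏ i ∈ Finset.range (N + 1), r i := by
    rw [hV, ncard_setOf_pow_eq (fun j => hr j j.isLt) (fun j => by simpa using hq j j.isLt),
      Fin.prod_univ_eq_prod_range]
  have hmem : ∀ z ∈ V, ∑ j : Fin (N + 1), (u j.val : ℂ) * z j ∈ T := by
    rw [hV]
    intro z hz
    refine sum_mem_rootSums _ _ N _ fun j => ?_
    rw [mem_nthRoots (hr j j.isLt), mul_pow, hz j, mul_comm]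
  refine ⟨fun z hz => ?_, ?_, hcardV, fun hinj => ⟨κ, hκ, ?_⟩⟩
  · have hroot : (T.map fun t => X - C t).prod.IsRoot (∑ j : Fin (N + 1), (u j.val : ℂ) * z j) :=
      isRoot_of_mem_roots ((roots_multiset_prod_X_sub_C T).symm ▸ hmem z hz)
    rw [hm, eval_mul, hroot.eq_zero, mul_zero]
  · rw [hm, natDegree_C_mul (by simpa), natDegree_multiset_prod_X_sub_C_eq_card, hcardT]
  · have hnodup := hVfin.toFinset.nodup.map_on fun x hx y hy =>
      hinj (hVfin.mem_toFinset.1 hx) (hVfin.mem_toFinset.1 hy)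
    have hT : hVfin.toFinset.val.map (fun z => ∑ j : Fin (N + 1), (u j.val : ℂ) * z j) = T := by
      refine Multiset.eq_of_le_of_card_le ((Multiset.le_iff_subset hnodup).2 ?_) ?_
      · simpa [Multiset.subset_iff] using hmem
      · rw [hcardT, Multiset.card_map, Finset.card_val, ← Set.ncard_eq_toFinset_card V hVfin,
          hcardV]
    rw [hm, Finset.prod_eq_multiset_prod, ← hT, Multiset.map_map]
    rfl
end

section
/- Let V be a zero-dimensional variety of D distinct points in C^n defined over Q, let Λ = (Λ_1,...,Λ_n) be indeterminates, U = Λ_1 X_1 + ... + Λ_n X_n, and m_U(Λ,Y) = Π_{j=1}^D (Y − U(ξ^{(j)})) the minimal polynomial of U over V. Then for 1 ≤ k ≤ n, the polynomial (∂m_U/∂Y)(Λ, U(X))·X_k + (∂m_U/∂Λ_k)(Λ, U(X)) lies in the ideal I(A^n × V) ⊂ Q[Λ, X_1,...,X_n], and deg_Y(∂m_U/∂Λ_k) ≤ D − 1. -/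
/-!
Since `m_U(Λ, U(ξ⁽ʲ⁾)) = 0` identically in `Λ`, differentiating in `Λ_k` with the chain rule
`∂(p(x)) = (∂p)(x) + p'(x) · ∂x` (`∂` acting coefficientwise on `p`) and `∂U(ξ⁽ʲ⁾)/∂Λ_k = ξ⁽ʲ⁾_k`
gives the identity. As `m_U` is monic of degree `D` in `Y`, its leading coefficient `1` is
killed by `∂/∂Λ_k`, which gives the degree bound.
-/

open Polynomial

namespace Derivation
variable {R A : Type*} [CommRing R] [CommRing A] [Algebra R A] (d : Derivation R A A)

theorem coeff_sum_monomial_apply (p : A[X]) (m : ℕ) :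
    (p.sum fun e a => monomial e (d a)).coeff m = d (p.coeff m) := by
  rw [Polynomial.sum_def, finsetSum_coeff]
  simp only [coeff_monomial, Finset.sum_ite_eq', mem_support_iff]
  split_ifs with h
  · rfl
  · rw [notMem_support_iff.mp h, map_zero]

theorem apply_eval_eq_eval_sum_monomial (x : A) (p : A[X]) :
    d (p.eval x) = (p.sum fun e a => monomial e (d a)).eval x + (derivative p).eval x * d x := by
  have hmap : (p.sum fun e a => monomial e (d a)) =
      PolynomialModule.equivPolynomial (d.mapCoeffs p) := by
    ext m; rw [coeff_sum_monomial_apply]; rfl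
  rw [apply_eval_eq, hmap, ← coe_aeval_eq_eval, PolynomialModule.aeval_equivPolynomial,
    PolynomialModule.eval_map', smul_eq_mul]
  rfl

theorem natDegree_sum_monomial_apply_le {p : A[X]} (hp : p.Monic) :
    (p.sum fun e a => monomial e (d a)).natDegree ≤ p.natDegree - 1 := by
  rw [natDegree_le_iff_coeff_eq_zero]
  intro m hm
  rw [coeff_sum_monomial_apply]
  rcases (show p.natDegree ≤ m by omega).eq_or_lt with h | h
  · rw [← h, hp.coeff_natDegree, map_one_eq_zero]
  · rw [coeff_eq_zero_of_natDegree_lt h, map_zero]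

end Derivation

theorem generic_minimal_polynomial_parametrization_general (n D : ℕ)
    (ξ : Fin D → Fin n → ℂ) (k : Fin n) :
    let mU : Polynomial (MvPolynomial (Fin n) ℂ) :=
      ∏ j : Fin D, (Polynomial.X -
        Polynomial.C (∑ i, MvPolynomial.X i * MvPolynomial.C (ξ j i)))
    let dLam : Polynomial (MvPolynomial (Fin n) ℂ) :=
      mU.sum fun e a => Polynomial.monomial e (MvPolynomial.pderiv k a)
    (∀ (lam : Fin n → ℂ) (j : Fin D),
      Polynomial.eval₂ (MvPolynomial.eval lam) (∑ i, lam i * ξ j i)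
          (Polynomial.derivative mU) * ξ j k
        + Polynomial.eval₂ (MvPolynomial.eval lam) (∑ i, lam i * ξ j i) dLam = 0)
      ∧ dLam.natDegree ≤ D - 1 := by
  intro mU dLam
  set U : Fin D → MvPolynomial (Fin n) ℂ :=
    fun j => ∑ i, MvPolynomial.X i * MvPolynomial.C (ξ j i)
  constructor
  · intro lam j
    have hroot : mU.eval (U j) = 0 := by
      rw [eval_prod]
      exact Finset.prod_eq_zero (Finset.mem_univ j) (by rw [eval_sub, eval_X, eval_C, sub_self])
    have hU : MvPolynomial.eval lam (U j) = ∑ i, lam i * ξ j i := by simp [U]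
    have hdU : MvPolynomial.pderiv k (U j) = MvPolynomial.C (ξ j k) := by
      simp [U, MvPolynomial.pderiv_X, Pi.single_apply]
    have hchain := (MvPolynomial.pderiv k).apply_eval_eq_eval_sum_monomial (U j) mU
    rw [hroot, map_zero, hdU] at hchain
    have hval := congrArg (MvPolynomial.eval lam) hchain
    rw [map_zero, map_add, map_mul, MvPolynomial.eval_C, ← eval₂_at_apply, ← eval₂_at_apply,
      hU] at hval
    linear_combination -hval
  · have hmonic : mU.Monic := monic_prod_of_monic _ _ fun j _ => monic_X_sub_C (U j)
    have hdeg : mU.natDegree = D := by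
      rw [natDegree_prod_of_monic _ _ fun j _ => monic_X_sub_C (U j)]
      simp
    simpa [hdeg] using (MvPolynomial.pderiv k).natDegree_sum_monomial_apply_le hmonic

/-- **Parametrizations from the generic minimal polynomial.** Let
`V = {ξ⁽¹⁾,…,ξ⁽ᴰ⁾} ⊆ ℂⁿ` be `D` distinct points, `U = Λ₁X₁ + ⋯ + ΛₙXₙ` the
generic linear form and `m_U(Λ,Y) = Π_j (Y - U(ξ⁽ʲ⁾))` its minimal polynomial
over `V` (a polynomial in `Y` with coefficients in `ℂ[Λ]`). Then for each `k`,
`(∂m_U/∂Y)(Λ,U(x))·x_k + (∂m_U/∂Λ_k)(Λ,U(x))` vanishes identically on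
`𝔸ⁿ × V` (i.e. lies in the vanishing ideal `I(𝔸ⁿ × V)`), and
`deg_Y(∂m_U/∂Λ_k) ≤ D - 1`. -/
theorem generic_minimal_polynomial_parametrization (n D : ℕ)
    (ξ : Fin D → Fin n → ℂ) (hξ : Function.Injective ξ) (k : Fin n) :
    let mU : Polynomial (MvPolynomial (Fin n) ℂ) :=
      ∏ j : Fin D, (Polynomial.X -
        Polynomial.C (∑ i, MvPolynomial.X i * MvPolynomial.C (ξ j i)))
    let dLam : Polynomial (MvPolynomial (Fin n) ℂ) :=
      mU.sum fun e a => Polynomial.monomial e (MvPolynomial.pderiv k a)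
    (∀ (lam : Fin n → ℂ) (j : Fin D),
      Polynomial.eval₂ (MvPolynomial.eval lam) (∑ i, lam i * ξ j i)
          (Polynomial.derivative mU) * ξ j k
        + Polynomial.eval₂ (MvPolynomial.eval lam) (∑ i, lam i * ξ j i) dLam = 0)
      ∧ dLam.natDegree ≤ D - 1 :=
  generic_minimal_polynomial_parametrization_general n D ξ k
end
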